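/- arXiv:1111.0512 — 3 statements merged into one kernel-verified Lean document; each statement's English description precedes it below -/
import Mathlib

section
/- (Milnor's lemma) If G is a group with a finite generating set A of subexponential growth, i.e. for every c > 1 there exists n ≥ 1 with γ_G^A(n) < cⁿ, and x, y ∈ G, then the subgroup of G generated by the set of conjugates {xⁿ y x⁻ⁿ : n = 0, 1, 2, …} is finitely generated. -/
/-- The growth function of a group `G` with respect to a generating set `A`:
`growth A n` counts the elements of `G` expressible as products of at most `n`
elements of `A ∪ A⁻¹`. -/
noncomputable def growth {G : Type*} [Group G] (A : Set G) (n : ℕ) : ℕ :=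
  Nat.card {g : G // ∃ l : List G, l.length ≤ n ∧ (∀ x ∈ l, x ∈ A ∪ A⁻¹) ∧ l.prod = g}

/-- The auxiliary word `y₀^{ε₀} y₁^{ε₁} ⋯ y_n^{ε_n}` where `y_i = xⁱ y x⁻ⁱ`. -/
private def milnorW {G : Type*} [Group G] (x y : G) (ε : ℕ → Bool) : ℕ → G
  | 0 => if ε 0 then y else 1
  | n+1 => milnorW x y ε n * (x ^ (n+1) * (if ε (n+1) then y else 1) * (x ^ (n+1))⁻¹)

/-- Balls in a group with finite generating set are finite. -/
private lemma milnor_ball_finite {G : Type*} [Group G] (A : Finset G) (L : ℕ) :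
    {g : G | ∃ l : List G, l.length ≤ L ∧ (∀ x ∈ l, x ∈ (A : Set G) ∪ (A : Set G)⁻¹) ∧
      l.prod = g}.Finite := by
  have hs : ((A : Set G) ∪ (A : Set G)⁻¹).Finite := A.finite_toSet.union A.finite_toSet.inv
  induction L with
  | zero =>
    apply (Set.finite_singleton (1 : G)).subset
    rintro g ⟨l, hlen, -, rfl⟩
    rw [Nat.le_zero, List.length_eq_zero_iff] at hlen
    subst hlen
    simp
  | succ L ih =>
    apply ((hs.mul ih).insert 1).subset
    rintro g ⟨l, hlen, hmem, rfl⟩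
    match l with
    | [] => simp
    | a :: l' =>
      right
      refine Set.mem_mul.mpr ⟨a, hmem a (by simp), l'.prod,
        ⟨l', ?_, fun z hz => hmem z (by simp [hz]), rfl⟩, by simp⟩
      simpa using Nat.succ_le_succ_iff.mp hlen

/-- **Milnor's lemma.** In a finitely generated group of subexponential growth, for any
`x, y` the subgroup generated by the conjugates `xⁿ y x⁻ⁿ`, `n = 0, 1, 2, …`, is
finitely generated. -/
theorem milnor_lemma_conjugates_fg
    {G : Type*} [Group G] (A : Finset G)
    (hgen : Subgroup.closure (A : Set G) = ⊤)
    (hsub : ∀ c : ℝ, 1 < c → ∃ n : ℕ, 1 ≤ n ∧ (growth (A : Set G) n : ℝ) < c ^ n)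
    (x y : G) :
    (Subgroup.closure {g : G | ∃ n : ℕ, g = x ^ n * y * (x ^ n)⁻¹}).FG := by
  set s : Set G := (A : Set G) ∪ (A : Set G)⁻¹ with hs_def
  -- membership in `s` is closed under inverses
  have sinv : ∀ g ∈ s, g⁻¹ ∈ s := by
    rintro g (hg | hg)
    · exact Or.inr (by simpa using hg)
    · exact Or.inl (by simpa using hg)
  -- word representations of `x` and `y`
  have hword : ∀ g : G, ∃ l : List G, (∀ z ∈ l, z ∈ s) ∧ l.prod = g := by
    intro g
    have hg : g ∈ Subgroup.closure (A : Set G) := hgen ▸ Subgroup.mem_top g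
    have hg' : g ∈ (Subgroup.closure (A : Set G)).toSubmonoid := hg
    rw [Subgroup.closure_toSubmonoid] at hg'
    exact Submonoid.exists_list_of_mem_closure hg'
  obtain ⟨Lx, hLxs, hLxp⟩ := hword x
  obtain ⟨Ly, hLys, hLyp⟩ := hword y
  -- a word for x⁻¹
  set Lx' : List G := (Lx.map fun z => z⁻¹).reverse with hLx'_def
  have hLx's : ∀ z ∈ Lx', z ∈ s := by
    intro z hz
    simp only [hLx'_def, List.mem_reverse, List.mem_map] at hz
    obtain ⟨w, hw, rfl⟩ := hz
    exact sinv w (hLxs w hw)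
  have hLx'p : Lx'.prod = x⁻¹ := by
    rw [hLx'_def, ← List.prod_inv_reverse, hLxp]
  have hLx'len : Lx'.length = Lx.length := by simp [hLx'_def]
  set K : ℕ := 2 * Lx.length + Ly.length + 1 with hK_def
  have hK1 : 1 ≤ K := by omega
  -- words for the milnorW elements
  have lemma3 : ∀ (n : ℕ) (ε : ℕ → Bool), ∃ l : List G,
      l.length ≤ (Lx.length + Ly.length) * (n + 1) ∧ (∀ z ∈ l, z ∈ s) ∧
      l.prod = milnorW x y ε n * x ^ (n + 1) := by
    intro n ε
    induction n with
    | zero =>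
      refine ⟨(if ε 0 then Ly else []) ++ Lx, ?_, ?_, ?_⟩
      · rcases Bool.eq_false_or_eq_true (ε 0) with h | h <;> simp [h] <;> omega
      · intro z hz
        rcases List.mem_append.mp hz with hz | hz
        · rcases Bool.eq_false_or_eq_true (ε 0) with h | h <;> simp [h] at hz
          exact hLys z hz
        · exact hLxs z hz
      · rcases Bool.eq_false_or_eq_true (ε 0) with h | h <;>
          simp [h, milnorW, List.prod_append, hLyp, hLxp]
    | succ n ih =>
      obtain ⟨l, hlen, hmem, hprod⟩ := ih
      refine ⟨l ++ ((if ε (n+1) then Ly else []) ++ Lx), ?_, ?_, ?_⟩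
      · have : ((if ε (n+1) then Ly else []) : List G).length ≤ Ly.length := by
          rcases Bool.eq_false_or_eq_true (ε (n+1)) with h | h <;> simp [h]
        simp only [List.length_append]
        nlinarith [hlen]
      · intro z hz
        rcases List.mem_append.mp hz with hz | hz
        · exact hmem z hz
        rcases List.mem_append.mp hz with hz | hz
        · rcases Bool.eq_false_or_eq_true (ε (n+1)) with h | h <;> simp [h] at hz
          exact hLys z hz
        · exact hLxs z hz
      · rcases Bool.eq_false_or_eq_true (ε (n+1)) with h | h <;>
          simp [h, milnorW, List.prod_append, hLyp, hLxp, hprod, pow_succ, mul_assoc]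
  -- full words for milnorW, of length ≤ K * (n+1)
  have lemma4 : ∀ (n : ℕ) (ε : ℕ → Bool), ∃ l : List G,
      l.length ≤ K * (n + 1) ∧ (∀ z ∈ l, z ∈ s) ∧ l.prod = milnorW x y ε n := by
    intro n ε
    obtain ⟨l, hlen, hmem, hprod⟩ := lemma3 n ε
    refine ⟨l ++ (List.replicate (n+1) Lx').flatten, ?_, ?_, ?_⟩
    · have h2 : (List.replicate (n+1) Lx').flatten.length = (n+1) * Lx.length := by
        simp [List.length_flatten, List.map_replicate, hLx'len, List.sum_replicate,
          smul_eq_mul]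
      simp only [List.length_append, h2]
      nlinarith [hlen]
    · intro z hz
      rcases List.mem_append.mp hz with hz | hz
      · exact hmem z hz
      · obtain ⟨L, hL, hzL⟩ := List.mem_flatten.mp hz
        rw [List.eq_of_mem_replicate hL] at hzL
        exact hLx's z hzL
    · have h3 : (List.replicate (n+1) Lx').flatten.prod = (x⁻¹) ^ (n+1) := by
        rw [List.prod_flatten, List.map_replicate, List.prod_replicate, hLx'p]
      rw [List.prod_append, hprod, h3, inv_pow]
      group
  -- choose the scale from subexponential growth
  set c : ℝ := (2 : ℝ) ^ ((1 : ℝ) / (2 * K)) with hc_def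
  have hc1 : 1 < c := by
    rw [hc_def]
    rw [Real.one_lt_rpow_iff_of_pos (by norm_num)]
    left
    constructor
    · norm_num
    · positivity
  obtain ⟨m, hm1, hm2⟩ := hsub c hc1
  have hcm : c ^ m = (2 : ℝ) ^ ((m : ℝ) / (2 * K)) := by
    rw [hc_def, ← Real.rpow_natCast ((2:ℝ) ^ ((1:ℝ)/(2*K))) m, ← Real.rpow_mul (by norm_num)]
    ring_nf
  -- the ball of radius m is finite
  have hball := milnor_ball_finite A m
  have hballfin : Finite {g : G // ∃ l : List G, l.length ≤ m ∧
      (∀ z ∈ l, z ∈ (A : Set G) ∪ (A : Set G)⁻¹) ∧ l.prod = g} := hball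
  -- degenerate case: G is trivial
  by_cases htriv : ∀ g : G, g = 1
  · refine ⟨∅, ?_⟩
    rw [Finset.coe_empty, Subgroup.closure_empty]
    symm
    rw [eq_bot_iff]
    rw [Subgroup.closure_le]
    intro g hg
    rw [htriv g]
    simp [Subgroup.mem_bot]
  -- hence the growth at radius m is at least 2
  push_neg at htriv
  obtain ⟨g₀, hg₀⟩ := htriv
  have hGm2 : 2 ≤ growth (A : Set G) m := by
    by_contra hlt
    push_neg at hlt
    have hsub1 : Subsingleton {g : G // ∃ l : List G, l.length ≤ m ∧
        (∀ z ∈ l, z ∈ (A : Set G) ∪ (A : Set G)⁻¹) ∧ l.prod = g} := by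
      rw [← Finite.card_le_one_iff_subsingleton]
      have : Nat.card {g : G // ∃ l : List G, l.length ≤ m ∧
        (∀ z ∈ l, z ∈ (A : Set G) ∪ (A : Set G)⁻¹) ∧ l.prod = g} = growth (A : Set G) m := rfl
      omega
    -- every element of A equals 1, so G is trivial; contradiction with g₀
    have hA1 : ∀ a ∈ (A : Set G), a = (1 : G) := by
      intro a ha
      have h1 : (⟨a, [a], by simpa using hm1,
          fun z hz => by simp at hz; subst hz; exact Set.mem_union_left _ ha, by simp⟩ :
          {g : G // ∃ l : List G, l.length ≤ m ∧
          (∀ z ∈ l, z ∈ (A : Set G) ∪ (A : Set G)⁻¹) ∧ l.prod = g}) =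
          ⟨1, [], by simp, by simp, by simp⟩ := Subsingleton.elim _ _
      simpa using congrArg Subtype.val h1
    apply hg₀
    have : g₀ ∈ Subgroup.closure (A : Set G) := hgen ▸ Subgroup.mem_top g₀
    have hle : Subgroup.closure (A : Set G) ≤ ⊥ := by
      rw [Subgroup.closure_le]
      intro a ha
      simp [Subgroup.mem_bot, hA1 a ha]
    simpa [Subgroup.mem_bot] using hle this
  -- K ≤ m, since otherwise growth m < 2
  have hKm : K ≤ m := by
    by_contra hmK
    push_neg at hmK
    have hlt2 : c ^ m < 2 := by
      rw [hcm]
      calc (2:ℝ) ^ ((m : ℝ) / (2 * K)) < (2:ℝ) ^ ((1:ℝ)) := by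
            rw [Real.rpow_lt_rpow_left_iff (by norm_num)]
            rw [div_lt_iff₀ (by positivity)]
            have hc1' : (m : ℝ) < 2 * K := by exact_mod_cast (by omega : m < 2 * K)
            linarith
        _ = 2 := by norm_num
    have : (growth (A : Set G) m : ℝ) < 2 := lt_trans hm2 hlt2
    have : growth (A : Set G) m < 2 := by exact_mod_cast this
    omega
  set N : ℕ := m / K with hN_def
  have hN1 : 1 ≤ N := Nat.one_le_div_iff (by omega) |>.mpr hKm
  have hKN : K * N ≤ m := by
    rw [hN_def, mul_comm]
    exact Nat.div_mul_le_self m K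
  have hmKN : m < 2 * K * N := by
    have h1 : m < K * (N + 1) := by
      have hdm := Nat.div_add_mod m K
      have hmod := Nat.mod_lt m (show 0 < K by omega)
      rw [← hN_def] at hdm
      nlinarith [hdm, hmod]
    nlinarith [hN1, hK1, h1]
  -- growth m < 2^N
  have hg2N : growth (A : Set G) m < 2 ^ N := by
    have hcmN : c ^ m < (2 : ℝ) ^ (N : ℕ) := by
      rw [hcm]
      have h2 : ((2:ℝ) ^ (N:ℕ)) = (2:ℝ) ^ ((N : ℕ) : ℝ) := by
        rw [Real.rpow_natCast]
      rw [h2, Real.rpow_lt_rpow_left_iff (by norm_num)]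
      rw [div_lt_iff₀ (by positivity)]
      have hc2' : (m : ℝ) < 2 * K * N := by exact_mod_cast hmKN
      linarith
    have : (growth (A : Set G) m : ℝ) < (2:ℝ) ^ (N:ℕ) := lt_trans hm2 hcmN
    exact_mod_cast this
  -- pigeonhole on the 2^N words
  have hfint : Fintype {g : G // ∃ l : List G, l.length ≤ m ∧
      (∀ z ∈ l, z ∈ (A : Set G) ∪ (A : Set G)⁻¹) ∧ l.prod = g} := hball.fintype
  -- extension of Fin N → Bool to ℕ → Bool
  let ext : (Fin N → Bool) → (ℕ → Bool) := fun ε i => if h : i < N then ε ⟨i, h⟩ else false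
  have hΦ : ∀ ε : Fin N → Bool, ∃ l : List G, l.length ≤ m ∧
      (∀ z ∈ l, z ∈ (A : Set G) ∪ (A : Set G)⁻¹) ∧ l.prod = milnorW x y (ext ε) (N - 1) := by
    intro ε
    obtain ⟨l, hlen, hmem, hprod⟩ := lemma4 (N - 1) (ext ε)
    refine ⟨l, ?_, hmem, hprod⟩
    have : N - 1 + 1 = N := by omega
    rw [this] at hlen
    omega
  let Φ : (Fin N → Bool) → {g : G // ∃ l : List G, l.length ≤ m ∧
      (∀ z ∈ l, z ∈ (A : Set G) ∪ (A : Set G)⁻¹) ∧ l.prod = g} :=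
    fun ε => ⟨milnorW x y (ext ε) (N - 1), hΦ ε⟩
  have hcards : Fintype.card {g : G // ∃ l : List G, l.length ≤ m ∧
      (∀ z ∈ l, z ∈ (A : Set G) ∪ (A : Set G)⁻¹) ∧ l.prod = g} <
      Fintype.card (Fin N → Bool) := by
    have h1 : Fintype.card (Fin N → Bool) = 2 ^ N := by simp
    have h2 : Fintype.card {g : G // ∃ l : List G, l.length ≤ m ∧
      (∀ z ∈ l, z ∈ (A : Set G) ∪ (A : Set G)⁻¹) ∧ l.prod = g} = growth (A : Set G) m := by
      rw [← Nat.card_eq_fintype_card]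
      rfl
    omega
  obtain ⟨ε, δ, hεδ, hWeq⟩ := Fintype.exists_ne_map_eq_of_card_lt Φ hcards
  have hWeq' : milnorW x y (ext ε) (N - 1) = milnorW x y (ext δ) (N - 1) :=
    congrArg Subtype.val hWeq
  -- find the largest index where ε and δ differ
  obtain ⟨i, hi⟩ := Function.ne_iff.mp hεδ
  have hidiff : ext ε (i : ℕ) ≠ ext δ (i : ℕ) := by
    simp only [ext, i.isLt, dif_pos]
    simpa using hi
  set P : ℕ → Prop := fun j => ext ε j ≠ ext δ j with hP_def
  have : DecidablePred P := fun j => instDecidableNot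
  set k : ℕ := Nat.findGreatest P (N - 1) with hk_def
  have hiN : (i : ℕ) ≤ N - 1 := by omega
  have hidiff' : P (i : ℕ) := hidiff
  have hPk' : P k := Nat.findGreatest_spec (P := P) hiN hidiff'
  have hPk : ext ε k ≠ ext δ k := hPk'
  have hk_le : k ≤ N - 1 := Nat.findGreatest_le (N - 1)
  have hgr : ∀ j, k < j → ext ε j = ext δ j := by
    intro j hj
    by_cases hjN : j ≤ N - 1
    · by_contra hne
      exact Nat.findGreatest_is_greatest (P := P) hj hjN hne
    · have hjN' : ¬ j < N := by omega
      simp [ext, hjN']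
  -- suffix congruence: W (N-1) ε * (W (N-1) δ)⁻¹ = W k ε * (W k δ)⁻¹
  have lemma2 : ∀ n, k ≤ n → milnorW x y (ext ε) n * (milnorW x y (ext δ) n)⁻¹ =
      milnorW x y (ext ε) k * (milnorW x y (ext δ) k)⁻¹ := by
    intro n hn
    induction n, hn using Nat.le_induction with
    | base => rfl
    | succ n hn ih =>
      have he : ext ε (n+1) = ext δ (n+1) := hgr (n+1) (by omega)
      have e1 : milnorW x y (ext ε) (n+1) = milnorW x y (ext ε) n *
          (x ^ (n+1) * (if ext ε (n+1) then y else 1) * (x ^ (n+1))⁻¹) := rfl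
      have e2 : milnorW x y (ext δ) (n+1) = milnorW x y (ext δ) n *
          (x ^ (n+1) * (if ext δ (n+1) then y else 1) * (x ^ (n+1))⁻¹) := rfl
      rw [e1, e2, he, ← ih]
      group
  have hWk : milnorW x y (ext ε) k = milnorW x y (ext δ) k := by
    have h := lemma2 (N - 1) hk_le
    rw [hWeq', mul_inv_cancel] at h
    have := h.symm
    rwa [mul_inv_eq_one] at this
  -- the subgroup generated by the first k conjugates
  set H : Subgroup G := Subgroup.closure {g : G | ∃ i, i < k ∧ g = x ^ i * y * (x ^ i)⁻¹}
    with hH_def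
  -- the partial words lie in H
  have lemma1 : ∀ (e : ℕ → Bool) (n : ℕ), n < k → milnorW x y e n ∈ H := by
    intro e n
    induction n with
    | zero =>
      intro h0
      rcases Bool.eq_false_or_eq_true (e 0) with h | h
      · rw [show milnorW x y e 0 = y by simp [milnorW, h]]
        exact Subgroup.subset_closure ⟨0, h0, by simp⟩
      · rw [show milnorW x y e 0 = 1 by simp [milnorW, h]]
        exact one_mem H
    | succ n ih =>
      intro hlt
      have e1 : milnorW x y e (n+1) = milnorW x y e n *
          (x ^ (n+1) * (if e (n+1) then y else 1) * (x ^ (n+1))⁻¹) := rfl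
      rw [e1]
      refine mul_mem (ih (by omega)) ?_
      rcases Bool.eq_false_or_eq_true (e (n+1)) with h | h
      · exact Subgroup.subset_closure ⟨n + 1, hlt, by simp [h]⟩
      · have h2 : x ^ (n+1) * (if e (n+1) then y else 1) * (x ^ (n+1))⁻¹ = 1 := by simp [h]
        rw [h2]
        exact one_mem H
  -- key: the k-th conjugate lies in H
  have key : x ^ k * y * (x ^ k)⁻¹ ∈ H := by
    obtain ⟨a, b, ha, hb, hab⟩ : ∃ a b : ℕ → Bool, a k = true ∧ b k = false ∧
        milnorW x y a k = milnorW x y b k := by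
      rcases Bool.eq_false_or_eq_true (ext ε k) with h | h
      · have h' : ext δ k = false := by
          rcases Bool.eq_false_or_eq_true (ext δ k) with h'' | h''
          · exact absurd (h.trans h''.symm) hPk
          · exact h''
        exact ⟨ext ε, ext δ, h, h', hWk⟩
      · have h' : ext δ k = true := by
          rcases Bool.eq_false_or_eq_true (ext δ k) with h'' | h''
          · exact h''
          · exact absurd (h.trans h''.symm) hPk
        exact ⟨ext δ, ext ε, h', h, hWk.symm⟩
    rcases Nat.eq_zero_or_pos k with hk0 | hk0
    · have hy : y = 1 := by
        rw [hk0] at ha hb hab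
        simpa [milnorW, ha, hb] using hab
      rw [hy]
      simpa using one_mem H
    · have hk1 : k - 1 + 1 = k := by omega
      set j := k - 1 with hj_def
      have ha' : a (j + 1) = true := by rw [hk1]; exact ha
      have hb' : b (j + 1) = false := by rw [hk1]; exact hb
      have hab' : milnorW x y a (j + 1) = milnorW x y b (j + 1) := by rw [hk1]; exact hab
      have e1 : milnorW x y a (j+1) = milnorW x y a j *
          (x ^ (j+1) * (if a (j+1) then y else 1) * (x ^ (j+1))⁻¹) := rfl
      have e2 : milnorW x y b (j+1) = milnorW x y b j *
          (x ^ (j+1) * (if b (j+1) then y else 1) * (x ^ (j+1))⁻¹) := rfl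
      have hab2 : milnorW x y a j * (x ^ (j+1) * y * (x ^ (j+1))⁻¹) = milnorW x y b j := by
        rw [e1, e2] at hab'
        simpa [ha', hb'] using hab'
      have h1 : x ^ (j+1) * y * (x ^ (j+1))⁻¹ = (milnorW x y a j)⁻¹ * milnorW x y b j := by
        rw [← hab2]
        group
      rw [← hk1, h1]
      exact mul_mem (inv_mem (lemma1 a j (by omega))) (lemma1 b j (by omega))
  -- H is stable under conjugation by x
  have conj : ∀ g ∈ H, x * g * x⁻¹ ∈ H := by
    intro g hg
    induction hg using Subgroup.closure_induction with
    | mem g hgmem =>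
      obtain ⟨i, hik, rfl⟩ := hgmem
      have h1 : x * (x ^ i * y * (x ^ i)⁻¹) * x⁻¹ = x ^ (i+1) * y * (x ^ (i+1))⁻¹ := by
        rw [pow_succ]
        group
      rw [h1]
      rcases Nat.lt_or_ge (i + 1) k with hik1 | hik1
      · exact Subgroup.subset_closure ⟨i + 1, hik1, rfl⟩
      · have : i + 1 = k := by omega
        rw [this]
        exact key
    | one => simpa using one_mem H
    | mul g h hgc hhc ihg ihh =>
      have : x * (g * h) * x⁻¹ = (x * g * x⁻¹) * (x * h * x⁻¹) := by group
      rw [this]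
      exact mul_mem ihg ihh
    | inv g hgc ihg =>
      have : x * g⁻¹ * x⁻¹ = (x * g * x⁻¹)⁻¹ := by group
      rw [this]
      exact inv_mem ihg
  -- all conjugates lie in H
  have allmem : ∀ n : ℕ, x ^ n * y * (x ^ n)⁻¹ ∈ H := by
    intro n
    induction n with
    | zero =>
      rcases Nat.eq_zero_or_pos k with hk0 | hk0
      · rw [hk0] at key
        simpa using key
      · exact Subgroup.subset_closure ⟨0, hk0, rfl⟩
    | succ n ih =>
      have h1 : x ^ (n+1) * y * (x ^ (n+1))⁻¹ = x * (x ^ n * y * (x ^ n)⁻¹) * x⁻¹ := by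
        rw [pow_succ]
        group
      rw [h1]
      exact conj _ ih
  -- conclude: the subgroup is generated by the finite set of the first k conjugates
  classical
  refine ⟨(Finset.range k).image (fun i => x ^ i * y * (x ^ i)⁻¹), ?_⟩
  have hTset : ((Finset.range k).image (fun i => x ^ i * y * (x ^ i)⁻¹) : Set G) =
      {g : G | ∃ i, i < k ∧ g = x ^ i * y * (x ^ i)⁻¹} := by
    ext g
    simp only [Finset.coe_image, Finset.coe_range, Set.mem_image, Set.mem_Iio, Set.mem_setOf_eq]
    constructor
    · rintro ⟨i, hik, rfl⟩; exact ⟨i, hik, rfl⟩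
    · rintro ⟨i, hik, rfl⟩; exact ⟨i, hik, rfl⟩
  rw [hTset]
  apply le_antisymm
  · rw [Subgroup.closure_le]
    rintro g ⟨i, _, rfl⟩
    exact Subgroup.subset_closure ⟨i, rfl⟩
  · rw [Subgroup.closure_le]
    rintro g ⟨n, rfl⟩
    exact allmem n
end

section
/- (Quartic growth of the Heisenberg group) Let H₃ be the group of 3×3 upper triangular integer matrices with 1's on the diagonal. For every finite generating set A of H₃ there exist constants C₁, C₂ with 0 < C₁ < C₂ such that C₁·n⁴ ≤ γ_{H₃}^A(n) ≤ C₂·n⁴ for all n ≥ 1. -/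
open Matrix

/-- The discrete Heisenberg group `H₃`: the group of 3×3 upper triangular integer
matrices with 1's on the diagonal, viewed as a subgroup of `GL₃(ℤ)`. -/
def Heisenberg : Subgroup (Matrix.GeneralLinearGroup (Fin 3) ℤ) where
  carrier := {M | ((M : Matrix (Fin 3) (Fin 3) ℤ)).BlockTriangular id ∧
    ∀ i, (M : Matrix (Fin 3) (Fin 3) ℤ) i i = 1}
  one_mem' := by
    refine ⟨?_, ?_⟩
    · simpa using Matrix.blockTriangular_one (b := (id : Fin 3 → Fin 3))
    · intro i
      simp
  mul_mem' := by
    rintro M N ⟨hMt, hMd⟩ ⟨hNt, hNd⟩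
    refine ⟨?_, ?_⟩
    · simpa [Units.val_mul] using hMt.mul hNt
    · intro i
      have hco : ((M * N : Matrix.GeneralLinearGroup (Fin 3) ℤ) : Matrix (Fin 3) (Fin 3) ℤ)
          = (M : Matrix (Fin 3) (Fin 3) ℤ) * (N : Matrix (Fin 3) (Fin 3) ℤ) :=
        Units.val_mul M N
      rw [hco, Matrix.mul_apply, Finset.sum_eq_single i]
      · rw [hMd i, hNd i, one_mul]
      · intro k _ hk
        rcases lt_or_gt_of_ne hk with h | h
        · rw [hMt (show id k < id i from h), zero_mul]
        · rw [hNt (show id i < id k from h), mul_zero]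
      · intro h
        exact absurd (Finset.mem_univ i) h
  inv_mem' := by
    rintro M ⟨hMt, hMd⟩
    set Mm : Matrix (Fin 3) (Fin 3) ℤ := (M : Matrix (Fin 3) (Fin 3) ℤ) with hMm
    set N : Matrix (Fin 3) (Fin 3) ℤ := Mm - 1 with hNdef
    have hN : ∀ i j : Fin 3, j ≤ i → N i j = 0 := by
      intro i j hij
      rcases eq_or_lt_of_le hij with h | h
      · subst h
        simp [hNdef, Matrix.sub_apply, hMd j]
      · simp [hNdef, Matrix.sub_apply, hMt (show id j < id i from h),
          Matrix.one_apply_ne (ne_of_gt h)]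
    have h00 : N 0 0 = 0 := hN 0 0 (le_refl _)
    have h10 : N 1 0 = 0 := hN 1 0 (by decide)
    have h11 : N 1 1 = 0 := hN 1 1 (le_refl _)
    have h20 : N 2 0 = 0 := hN 2 0 (by decide)
    have h21 : N 2 1 = 0 := hN 2 1 (by decide)
    have h22 : N 2 2 = 0 := hN 2 2 (le_refl _)
    have hN3 : N * N * N = 0 := by
      ext i j
      fin_cases i <;> fin_cases j <;>
        simp [Matrix.mul_apply, Fin.sum_univ_three, h00, h10, h11, h20, h21, h22]
    set Cm : Matrix (Fin 3) (Fin 3) ℤ := 1 - N + N * N with hCm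
    have hM1 : Mm = 1 + N := by rw [hNdef]; abel
    have hMC : Mm * Cm = 1 := by
      have : Mm * Cm = 1 + N * N * N := by rw [hM1, hCm]; noncomm_ring
      rw [this, hN3, add_zero]
    have hval : ((M⁻¹ : Matrix.GeneralLinearGroup (Fin 3) ℤ) : Matrix (Fin 3) (Fin 3) ℤ)
        = Cm := by
      have hIM : ((M⁻¹ : Matrix.GeneralLinearGroup (Fin 3) ℤ) : Matrix (Fin 3) (Fin 3) ℤ)
          * Mm = 1 := by
        rw [hMm, ← Units.val_mul, inv_mul_cancel, Units.val_one]
      calc ((M⁻¹ : Matrix.GeneralLinearGroup (Fin 3) ℤ) : Matrix (Fin 3) (Fin 3) ℤ)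
          = ((M⁻¹ : Matrix.GeneralLinearGroup (Fin 3) ℤ) : Matrix (Fin 3) (Fin 3) ℤ)
            * (Mm * Cm) := by rw [hMC, mul_one]
        _ = (((M⁻¹ : Matrix.GeneralLinearGroup (Fin 3) ℤ) : Matrix (Fin 3) (Fin 3) ℤ)
            * Mm) * Cm := by rw [mul_assoc]
        _ = Cm := by rw [hIM, one_mul]
    constructor
    · intro i j hij
      rw [hval, hCm]
      have hZ : N i j = 0 := hN i j (le_of_lt hij)
      have hZ2 : (N * N) i j = 0 := by
        rw [Matrix.mul_apply, Finset.sum_eq_zero]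
        intro k _
        rcases le_or_gt k i with h | h
        · rw [hN i k h, zero_mul]
        · rw [hN k j (le_trans (le_of_lt hij) (le_of_lt h)), mul_zero]
      have hne : ¬ i = j := fun h => by subst h; exact lt_irrefl _ hij
      simp [Matrix.add_apply, Matrix.sub_apply, hZ, hZ2, Matrix.one_apply, hne]
    · intro i
      rw [hval, hCm]
      have hZ : N i i = 0 := hN i i (le_refl _)
      have hZ2 : (N * N) i i = 0 := by
        rw [Matrix.mul_apply, Finset.sum_eq_zero]
        intro k _
        rcases le_or_gt k i with h | h
        · rw [hN i k h, zero_mul]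
        · rw [hN k i (le_of_lt h), mul_zero]
      simp [Matrix.add_apply, Matrix.sub_apply, hZ, hZ2]

/-! In coordinates `(x, y, z)`, with `z` the central one, the product is
`(x + x', y + y', z + z' + x y')`. Along a word of length `n` in generators whose coordinates are
at most `K`, therefore, `|x|, |y| ≤ K n` and `|z| ≤ (K n) ^ 2`: the ball of radius `n` lies in a
box with `O(n ^ 4)` points. Conversely, if `X = (1, 0, 0)` and `Y = (0, 1, 0)` have word length
at most `L`, the commutator `⁅X ^ p, Y ^ q⁆ = (0, 0, p q)` has length at most `2 (p + q) L`, so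
writing the central coordinate in base `m` puts the `m ^ 4` elements `(i, j, i j + k)`,
`i, j < m`, `k < m ^ 2`, in the ball of radius `8 m L`. -/

open scoped commutatorElement

theorem div_two_mul_le_max_one_div (n c : ℕ) (hc : 0 < c) :
    (n : ℝ) / (2 * c) ≤ (max 1 (n / c) : ℕ) := by
  rw [div_le_iff₀ (by positivity), Nat.cast_max, Nat.cast_one]
  rcases lt_or_ge n c with h | h
  · calc (n : ℝ) ≤ 1 * (2 * c) := by
          have : (n : ℝ) ≤ c := by exact_mod_cast h.le
          linarith
      _ ≤ max 1 ((n / c : ℕ) : ℝ) * (2 * c) := by gcongr; exact le_max_left _ _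
  · have hq : 1 ≤ n / c := Nat.div_pos h hc
    have hn : n ≤ n / c * (2 * c) := by nlinarith [Nat.lt_div_mul_add (a := n) hc]
    calc (n : ℝ) ≤ (n / c : ℕ) * (2 * c) := by exact_mod_cast hn
      _ ≤ max 1 ((n / c : ℕ) : ℝ) * (2 * c) := by gcongr; exact le_max_right _ _

section WordBall

variable {M : Type*} [Monoid M] {S : Set M} {g h : M} {m n : ℕ}

def wordBall (S : Set M) (n : ℕ) : Set M :=
  {g | ∃ l : List M, l.length ≤ n ∧ (∀ x ∈ l, x ∈ S) ∧ l.prod = g}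

theorem one_mem_wordBall : (1 : M) ∈ wordBall S n :=
  ⟨[], Nat.zero_le n, by simp, List.prod_nil⟩

theorem wordBall_mono (hmn : m ≤ n) : wordBall S m ⊆ wordBall S n :=
  fun _ ⟨l, hl, hS, hprod⟩ ↦ ⟨l, hl.trans hmn, hS, hprod⟩

theorem mul_mem_wordBall (hg : g ∈ wordBall S m) (hh : h ∈ wordBall S n) :
    g * h ∈ wordBall S (m + n) := by
  obtain ⟨l₁, hl₁, hS₁, rfl⟩ := hg
  obtain ⟨l₂, hl₂, hS₂, rfl⟩ := hh
  refine ⟨l₁ ++ l₂, by simp only [List.length_append]; omega, ?_, List.prod_append⟩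
  simpa only [List.mem_append, or_imp, forall_and] using ⟨hS₁, hS₂⟩

theorem pow_mem_wordBall (hg : g ∈ wordBall S n) (k : ℕ) : g ^ k ∈ wordBall S (k * n) := by
  induction k with
  | zero => simpa using one_mem_wordBall
  | succ k ih => simpa only [pow_succ, Nat.succ_mul] using mul_mem_wordBall ih hg

theorem one_le_ncard_wordBall (hfin : (wordBall S n).Finite) : 1 ≤ (wordBall S n).ncard :=
  (Set.ncard_pos hfin).2 ⟨1, one_mem_wordBall⟩

end WordBall

section WordBallGroup

variable {G : Type*} [Group G] {S : Set G} {g h : G} {m n : ℕ}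

theorem growth_eq_ncard_wordBall (A : Set G) (n : ℕ) :
    growth A n = (wordBall (A ∪ A⁻¹) n).ncard :=
  rfl

theorem inv_mem_wordBall (hS : S⁻¹ = S) (hg : g ∈ wordBall S n) : g⁻¹ ∈ wordBall S n := by
  obtain ⟨l, hl, hlS, rfl⟩ := hg
  refine ⟨(l.map (·⁻¹)).reverse, by simpa using hl, ?_, (List.prod_inv_reverse l).symm⟩
  simp only [List.mem_reverse, List.mem_map, forall_exists_index, and_imp,
    forall_apply_eq_imp_iff₂]
  intro x hx
  rw [← hS]
  simpa using hlS x hx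

theorem commutatorElement_mem_wordBall (hS : S⁻¹ = S) (hg : g ∈ wordBall S m)
    (hh : h ∈ wordBall S n) : ⁅g, h⁆ ∈ wordBall S (2 * (m + n)) := by
  rw [commutatorElement_def, show 2 * (m + n) = m + n + m + n by ring]
  exact mul_mem_wordBall (mul_mem_wordBall (mul_mem_wordBall hg hh) (inv_mem_wordBall hS hg))
    (inv_mem_wordBall hS hh)

theorem exists_mem_wordBall_of_closure_eq_top {A : Set G} (hA : Subgroup.closure A = ⊤) (g : G) :
    ∃ n, g ∈ wordBall (A ∪ A⁻¹) n := by
  have hg : g ∈ Submonoid.closure (A ∪ A⁻¹) := by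
    rw [← Subgroup.closure_toSubmonoid, hA]
    trivial
  obtain ⟨l, hlA, rfl⟩ := Submonoid.exists_list_of_mem_closure hg
  exact ⟨l.length, l, le_rfl, hlA, rfl⟩

end WordBallGroup

namespace Heisenberg

open Finset

def matrix (x y z : ℤ) : Matrix (Fin 3) (Fin 3) ℤ := !![1, x, z; 0, 1, y; 0, 0, 1]

theorem matrix_mul (x y z x' y' z' : ℤ) :
    matrix x y z * matrix x' y' z' = matrix (x + x') (y + y') (z + z' + x * y') := by
  ext i j
  fin_cases i <;> fin_cases j <;> simp [matrix, Matrix.mul_apply, Fin.sum_univ_three] <;> ring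

theorem matrix_zero : matrix 0 0 0 = 1 := by
  ext i j
  fin_cases i <;> fin_cases j <;> rfl

def mk (x y z : ℤ) : Heisenberg :=
  ⟨⟨matrix x y z, matrix (-x) (-y) (x * y - z),
    by rw [matrix_mul, ← matrix_zero]; congr 1 <;> ring,
    by rw [matrix_mul, ← matrix_zero]; congr 1 <;> ring⟩,
   fun i j hij ↦ by fin_cases i <;> fin_cases j <;> first | rfl | exact absurd hij (by decide),
   fun i ↦ by fin_cases i <;> rfl⟩

theorem mk_mul (x y z x' y' z' : ℤ) :
    mk x y z * mk x' y' z' = mk (x + x') (y + y') (z + z' + x * y') :=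
  Subtype.ext <| Units.ext <| matrix_mul x y z x' y' z'

theorem mk_zero : mk 0 0 0 = 1 :=
  Subtype.ext <| Units.ext matrix_zero

theorem mk_inv (x y z : ℤ) : (mk x y z)⁻¹ = mk (-x) (-y) (x * y - z) := by
  refine inv_eq_of_mul_eq_one_right ?_
  rw [mk_mul, ← mk_zero]
  congr 1 <;> ring

def xCoord (g : Heisenberg) : ℤ := ((g : GL (Fin 3) ℤ) : Matrix (Fin 3) (Fin 3) ℤ) 0 1

def yCoord (g : Heisenberg) : ℤ := ((g : GL (Fin 3) ℤ) : Matrix (Fin 3) (Fin 3) ℤ) 1 2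

def zCoord (g : Heisenberg) : ℤ := ((g : GL (Fin 3) ℤ) : Matrix (Fin 3) (Fin 3) ℤ) 0 2

@[simp] theorem xCoord_mk (x y z : ℤ) : xCoord (mk x y z) = x := rfl

@[simp] theorem yCoord_mk (x y z : ℤ) : yCoord (mk x y z) = y := rfl

@[simp] theorem zCoord_mk (x y z : ℤ) : zCoord (mk x y z) = z := rfl

theorem mk_coords (g : Heisenberg) : mk (xCoord g) (yCoord g) (zCoord g) = g := by
  obtain ⟨⟨M, _, _, _⟩, hupper, hdiag⟩ := g
  refine Subtype.ext <| Units.ext ?_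
  ext i j
  fin_cases i <;> fin_cases j
  all_goals first
    | rfl
    | exact (hdiag _).symm
    | exact (hupper (by decide)).symm

theorem xCoord_mul (g h : Heisenberg) : xCoord (g * h) = xCoord g + xCoord h := by
  rw [← mk_coords g, ← mk_coords h, mk_mul]
  simp

theorem yCoord_mul (g h : Heisenberg) : yCoord (g * h) = yCoord g + yCoord h := by
  rw [← mk_coords g, ← mk_coords h, mk_mul]
  simp

theorem zCoord_mul (g h : Heisenberg) :
    zCoord (g * h) = zCoord g + zCoord h + xCoord g * yCoord h := by
  rw [← mk_coords g, ← mk_coords h, mk_mul]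
  simp

def coords (g : Heisenberg) : ℤ × ℤ × ℤ := (xCoord g, yCoord g, zCoord g)

theorem coords_injective : Function.Injective coords := by
  intro g h hgh
  simp only [coords, Prod.mk.injEq] at hgh
  rw [← mk_coords g, ← mk_coords h, hgh.1, hgh.2.1, hgh.2.2]

theorem coords_one : coords 1 = (0, 0, 0) := by
  rw [← mk_zero]
  rfl

noncomputable def box (r : ℕ) : Finset (ℤ × ℤ × ℤ) :=
  Icc (-r : ℤ) r ×ˢ Icc (-r : ℤ) r ×ˢ Icc (-(r : ℤ) ^ 2) ((r : ℤ) ^ 2)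

theorem mem_box {r : ℕ} {p : ℤ × ℤ × ℤ} :
    p ∈ box r ↔ |p.1| ≤ r ∧ |p.2.1| ≤ r ∧ |p.2.2| ≤ (r : ℤ) ^ 2 := by
  simp only [box, mem_product, mem_Icc, abs_le]

theorem card_box_le {r : ℕ} (hr : 1 ≤ r) : #(box r) ≤ 27 * r ^ 4 := by
  have hcard : #(box r) = (2 * r + 1) ^ 2 * (2 * r ^ 2 + 1) := by
    have hside : ((r : ℤ) + 1 - -r).toNat = 2 * r + 1 := by omega
    have hctr : ((r : ℤ) ^ 2 + 1 - -(r : ℤ) ^ 2).toNat = 2 * r ^ 2 + 1 := by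
      rw [show (r : ℤ) ^ 2 + 1 - -(r : ℤ) ^ 2 = ((2 * r ^ 2 + 1 : ℕ) : ℤ) by
        push_cast; ring]
      exact Int.toNat_natCast _
    simp only [box, card_product, Int.card_Icc, hside, hctr]
    ring
  calc #(box r) = (2 * r + 1) ^ 2 * (2 * r ^ 2 + 1) := hcard
    _ ≤ (3 * r) ^ 2 * (3 * r ^ 2) := by gcongr <;> nlinarith
    _ = 27 * r ^ 4 := by ring

theorem coords_mul_mem_box {g h : Heisenberg} {r r' : ℕ} (hg : coords g ∈ box r)
    (hh : coords h ∈ box r') : coords (g * h) ∈ box (r + r') := by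
  rw [mem_box] at hg hh ⊢
  obtain ⟨hgx, hgy, hgz⟩ := hg
  obtain ⟨hhx, hhy, hhz⟩ := hh
  simp only [coords, xCoord_mul, yCoord_mul, zCoord_mul, Nat.cast_add] at *
  refine ⟨(abs_add_le _ _).trans (add_le_add hgx hhx),
    (abs_add_le _ _).trans (add_le_add hgy hhy), ?_⟩
  calc |zCoord g + zCoord h + xCoord g * yCoord h|
      ≤ |zCoord g| + |zCoord h| + |xCoord g| * |yCoord h| := by
        rw [← abs_mul]
        exact abs_add_three _ _ _
    _ ≤ (r : ℤ) ^ 2 + (r' : ℤ) ^ 2 + r * r' := by gcongr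
    _ ≤ ((r : ℤ) + r') ^ 2 := by nlinarith [(Nat.cast_nonneg _ : (0 : ℤ) ≤ r * r')]

variable {S : Set Heisenberg} {K L m n : ℕ}

theorem coords_mem_box_of_mem_wordBall (hS : ∀ s ∈ S, coords s ∈ box K) {g : Heisenberg}
    (hg : g ∈ wordBall S n) : coords g ∈ box (K * n) := by
  obtain ⟨l, hl, hlS, rfl⟩ := hg
  induction l generalizing n with
  | nil =>
    simp only [List.prod_nil, coords_one, mem_box, abs_zero]
    refine ⟨?_, ?_, ?_⟩ <;> positivity
  | cons s l ih =>
    cases n with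
    | zero => simp at hl
    | succ n =>
      rw [List.prod_cons, Nat.mul_succ, add_comm]
      exact coords_mul_mem_box (hS s (hlS s List.mem_cons_self))
        (ih (by simpa using hl) fun x hx ↦ hlS x (List.mem_cons_of_mem s hx))

theorem exists_coords_mem_box (hS : S.Finite) :
    ∃ K : ℕ, 1 ≤ K ∧ ∀ s ∈ S, coords s ∈ box K := by
  obtain ⟨M, hM⟩ := (hS.image fun s ↦ |xCoord s| + |yCoord s| + |zCoord s|).bddAbove
  refine ⟨M.toNat + 1, by omega, fun s hs ↦ ?_⟩
  have hsM := hM ⟨s, hs, rfl⟩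
  have hK : M ≤ ((M.toNat + 1 : ℕ) : ℤ) := by omega
  have hK2 : ((M.toNat + 1 : ℕ) : ℤ) ≤ ((M.toNat + 1 : ℕ) : ℤ) ^ 2 := by nlinarith
  simp only [mem_box, coords]
  refine ⟨?_, ?_, ?_⟩ <;>
    linarith [abs_nonneg (xCoord s), abs_nonneg (yCoord s), abs_nonneg (zCoord s)]

theorem wordBall_finite (hS : ∀ s ∈ S, coords s ∈ box K) (n : ℕ) : (wordBall S n).Finite :=
  Set.Finite.of_finite_image ((box (K * n)).finite_toSet.subset <| Set.image_subset_iff.2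
    fun _ hg ↦ coords_mem_box_of_mem_wordBall hS hg) coords_injective.injOn

theorem ncard_wordBall_le (hS : ∀ s ∈ S, coords s ∈ box K) (hK : 1 ≤ K) (hn : 1 ≤ n) :
    (wordBall S n).ncard ≤ 27 * (K * n) ^ 4 :=
  calc (wordBall S n).ncard ≤ (box (K * n) : Set (ℤ × ℤ × ℤ)).ncard :=
        Set.ncard_le_ncard_of_injOn coords (fun _ hg ↦ coords_mem_box_of_mem_wordBall hS hg)
          coords_injective.injOn (box (K * n)).finite_toSet
    _ = #(box (K * n)) := Set.ncard_coe_finset _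
    _ ≤ 27 * (K * n) ^ 4 := card_box_le (Nat.one_le_iff_ne_zero.2 (by positivity))

theorem mk_one_zero_zero_pow (p : ℕ) : mk 1 0 0 ^ p = mk p 0 0 := by
  induction p with
  | zero => exact mk_zero.symm
  | succ p ih => rw [pow_succ, ih, mk_mul]; norm_num

theorem mk_zero_one_zero_pow (q : ℕ) : mk 0 1 0 ^ q = mk 0 q 0 := by
  induction q with
  | zero => exact mk_zero.symm
  | succ q ih => rw [pow_succ, ih, mk_mul]; norm_num

theorem commutatorElement_mk (p q : ℤ) : ⁅mk p 0 0, mk 0 q 0⁆ = mk 0 0 (p * q) := by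
  rw [commutatorElement_def, mk_inv, mk_inv, mk_mul, mk_mul, mk_mul]
  congr 1 <;> ring

theorem mk_eq_mul_commutatorElement (i j m q r : ℕ) :
    mk i j (i * j + (m * q + r)) =
      mk 1 0 0 ^ i * mk 0 1 0 ^ j * ⁅mk 1 0 0 ^ m, mk 0 1 0 ^ q⁆ *
        ⁅mk 1 0 0 ^ r, mk 0 1 0 ^ 1⁆ := by
  simp only [mk_one_zero_zero_pow, mk_zero_one_zero_pow, commutatorElement_mk, mk_mul]
  congr 1 <;> push_cast <;> ring

theorem mk_mem_wordBall (hS : S⁻¹ = S) (hx : mk 1 0 0 ∈ wordBall S L)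
    (hy : mk 0 1 0 ∈ wordBall S L) {i j k : ℕ} (hi : i < m) (hj : j < m) (hk : k < m ^ 2) :
    mk i j (i * j + k) ∈ wordBall S (8 * m * L) := by
  have hq : k / m < m := Nat.div_lt_of_lt_mul (by rwa [← sq])
  have hr : k % m < m := Nat.mod_lt _ (by omega)
  have hk : (k : ℤ) = m * (k / m : ℕ) + (k % m : ℕ) := by
    exact_mod_cast (Nat.div_add_mod k m).symm
  rw [hk, mk_eq_mul_commutatorElement]
  refine wordBall_mono ?_ <| mul_mem_wordBall
    (mul_mem_wordBall (mul_mem_wordBall (pow_mem_wordBall hx i) (pow_mem_wordBall hy j))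
      (commutatorElement_mem_wordBall hS (pow_mem_wordBall hx m) (pow_mem_wordBall hy _)))
    (commutatorElement_mem_wordBall hS (pow_mem_wordBall hx _) (pow_mem_wordBall hy 1))
  calc i * L + j * L + 2 * (m * L + k / m * L) + 2 * (k % m * L + 1 * L)
      = (i + j + 2 * (m + k / m) + 2 * (k % m + 1)) * L := by ring
    _ ≤ 8 * m * L := Nat.mul_le_mul_right L (by omega)

theorem pow_four_le_ncard_wordBall (hfin : (wordBall S n).Finite) (hS : S⁻¹ = S)
    (hx : mk 1 0 0 ∈ wordBall S L) (hy : mk 0 1 0 ∈ wordBall S L) (hn : 8 * m * L ≤ n) :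
    m ^ 4 ≤ (wordBall S n).ncard := by
  let f : ℕ × ℕ × ℕ → Heisenberg := fun p ↦ mk p.1 p.2.1 (p.1 * p.2.1 + p.2.2)
  have hf : Set.InjOn f ↑(range m ×ˢ range m ×ˢ range (m ^ 2)) := by
    rintro ⟨i, j, k⟩ - ⟨i', j', k'⟩ - h
    have hx := congrArg xCoord h
    have hy := congrArg yCoord h
    have hz := congrArg zCoord h
    simp only [f, xCoord_mk, yCoord_mk, zCoord_mk, Nat.cast_inj] at hx hy hz
    subst hx hy
    simpa using hz
  calc m ^ 4 = #(range m ×ˢ range m ×ˢ range (m ^ 2)) := by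
        simp only [card_product, card_range]; ring
    _ = (↑(range m ×ˢ range m ×ˢ range (m ^ 2)) : Set (ℕ × ℕ × ℕ)).ncard :=
        (Set.ncard_coe_finset _).symm
    _ ≤ (wordBall S n).ncard := Set.ncard_le_ncard_of_injOn f (fun ⟨i, j, k⟩ hp ↦ by
          simp only [coe_product, coe_range, Set.mem_prod, Set.mem_Iio] at hp
          exact wordBall_mono hn (mk_mem_wordBall hS hx hy hp.1 hp.2.1 hp.2.2)) hf hfin

theorem max_one_pow_four_le_ncard_wordBall
    (hfin : (wordBall S n).Finite) (hS : S⁻¹ = S) (hx : mk 1 0 0 ∈ wordBall S L)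
    (hy : mk 0 1 0 ∈ wordBall S L) : max 1 (n / (8 * L)) ^ 4 ≤ (wordBall S n).ncard := by
  rcases Nat.eq_zero_or_pos (n / (8 * L)) with h | h
  · simpa [h] using one_le_ncard_wordBall hfin
  · rw [max_eq_right h]
    refine pow_four_le_ncard_wordBall hfin hS hx hy ?_
    linarith [Nat.div_mul_le_self n (8 * L)]

end Heisenberg

open Heisenberg in
/-- **Quartic growth of the discrete Heisenberg group.** For every finite generating
set `A` of `H₃` there are constants `0 < C₁ < C₂` with
`C₁·n⁴ ≤ γ_{H₃}^A(n) ≤ C₂·n⁴` for all `n ≥ 1`. -/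
theorem heisenberg_quartic_growth
    (A : Finset Heisenberg)
    (hgen : Subgroup.closure (A : Set Heisenberg) = ⊤) :
    ∃ C₁ C₂ : ℝ, 0 < C₁ ∧ C₁ < C₂ ∧
      ∀ n : ℕ, 1 ≤ n →
        C₁ * (n : ℝ) ^ 4 ≤ (growth (A : Set Heisenberg) n : ℝ) ∧
        (growth (A : Set Heisenberg) n : ℝ) ≤ C₂ * (n : ℝ) ^ 4 := by
  set S := (A : Set Heisenberg) ∪ (A : Set Heisenberg)⁻¹
  have hS : S⁻¹ = S := by rw [Set.union_inv, inv_inv, Set.union_comm]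
  obtain ⟨K, hK, hSK⟩ := exists_coords_mem_box (A.finite_toSet.union A.finite_toSet.inv)
  obtain ⟨Lx, hx⟩ := exists_mem_wordBall_of_closure_eq_top hgen (mk 1 0 0)
  obtain ⟨Ly, hy⟩ := exists_mem_wordBall_of_closure_eq_top hgen (mk 0 1 0)
  set L := Lx + Ly + 1
  have hx' := wordBall_mono (show Lx ≤ L by omega) hx
  have hy' := wordBall_mono (show Ly ≤ L by omega) hy
  have hK1 : (1 : ℝ) ≤ K := by exact_mod_cast hK
  refine ⟨(1 / (16 * L)) ^ 4, 27 * K ^ 4, by positivity, ?_, fun n hn ↦ ⟨?_, ?_⟩⟩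
  · calc (1 / (16 * L) : ℝ) ^ 4 ≤ 1 := pow_le_one₀ (by positivity)
          ((div_le_one (by positivity)).2 (by norm_cast; omega))
      _ < 27 * 1 ^ 4 := by norm_num
      _ ≤ 27 * (K : ℝ) ^ 4 := by gcongr
  · rw [growth_eq_ncard_wordBall]
    calc (1 / (16 * L)) ^ 4 * (n : ℝ) ^ 4 = ((n : ℝ) / (2 * (8 * L : ℕ))) ^ 4 := by
          push_cast; ring
      _ ≤ ((max 1 (n / (8 * L)) : ℕ) : ℝ) ^ 4 := by
          gcongr
          exact div_two_mul_le_max_one_div n (8 * L) (by omega)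
      _ ≤ (wordBall S n).ncard := by
          rw [← Nat.cast_pow]
          exact Nat.cast_le.2
            (max_one_pow_four_le_ncard_wordBall (wordBall_finite hSK n) hS hx' hy')
  · rw [growth_eq_ncard_wordBall]
    calc ((wordBall S n).ncard : ℝ) ≤ (27 * (K * n) ^ 4 : ℕ) :=
          Nat.cast_le.2 (ncard_wordBall_le hSK hK hn)
      _ = 27 * K ^ 4 * (n : ℝ) ^ 4 := by push_cast; ring
end

section
/- (Lower bound on growth via the augmentation ideal) Let G be a group and let S be a finite subset of G generating G as a semigroup (every element of G is a product of elements of S). Let γ_G^S(n) denote the number of elements of G expressible as products of at most n elements of S. Let F be a field, let F[G] be the group algebra of G over F, let Δ ⊆ F[G] be the augmentation ideal (the kernel of the F-algebra homomorphism F[G] → F sending every group element to 1), and let a_n = dim_F(Δⁿ/Δⁿ⁺¹) be the dimension of the n-th quotient of powers of Δ as an F-vector space. Then for every n ∈ ℕ, γ_G^S(n) ≥ a_n. -/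
/-- The semigroup growth function of a group `G` with respect to a set `S` of semigroup
generators: `semigroupGrowth S n` counts the elements of `G` expressible as products of
at most `n` elements of `S` (no inverses allowed). -/
noncomputable def semigroupGrowth {G : Type*} [Group G] (S : Set G) (n : ℕ) : ℕ :=
  Nat.card {g : G // ∃ l : List G, l.length ≤ n ∧ (∀ x ∈ l, x ∈ S) ∧ l.prod = g}

/-- The augmentation ideal `Δ` of the group algebra `F[G]`: the kernel of the
`F`-algebra homomorphism `F[G] → F` sending every group element to `1`. -/
noncomputable def augmentationIdeal (F : Type*) [Field F] (G : Type*) [Group G] :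
    Ideal (MonoidAlgebra F G) :=
  RingHom.ker ((MonoidAlgebra.lift F F G) 1)

/-!
Write `Bₙ` for the set of products of at most `n` elements of `S`. Since
`gh - 1 = (g - 1)(h - 1) + (g - 1) + (h - 1)` and `S` generates `G` as a monoid,
`Δ = U + Δ²`, where `U` is spanned by the `s - 1` with `s ∈ S`; hence `Δⁿ ⊆ Uⁿ + Δⁿ⁺¹`
(and `F[G] = F·1 + Δ` for `n = 0`). Expanding products, `Uⁿ` lies in the span of `Bₙ`, so
`Δⁿ/Δⁿ⁺¹` is spanned by the images of the elements of `Bₙ`.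
-/

theorem pow_le_pow_sup_pow_succ {α : Type*} [IdemSemiring α] {u i : α} (hu : u ≤ i)
    (hi : i ≤ u ⊔ i ^ 2) : ∀ n : ℕ, i ^ n ≤ u ^ n ⊔ i ^ (n + 1)
  | 0 => by simp
  | n + 1 => by
    have hui : u ^ n * i ^ 2 ≤ i ^ (n + 2) := by
      rw [pow_add]; exact mul_le_mul_left (pow_le_pow_left' hu n) _
    calc i ^ (n + 1) = i ^ n * i := pow_succ i n
      _ ≤ (u ^ n ⊔ i ^ (n + 1)) * i := mul_le_mul_left (pow_le_pow_sup_pow_succ hu hi n) i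
      _ = u ^ n * i ⊔ i ^ (n + 2) := by rw [← add_eq_sup, add_mul, add_eq_sup, ← pow_succ]
      _ ≤ u ^ n * (u ⊔ i ^ 2) ⊔ i ^ (n + 2) := sup_le_sup_right (mul_le_mul_right hi _) _
      _ = u ^ (n + 1) ⊔ u ^ n * i ^ 2 ⊔ i ^ (n + 2) := by
        rw [← add_eq_sup u, mul_add, add_eq_sup, ← pow_succ]
      _ ≤ u ^ (n + 1) ⊔ i ^ (n + 2) := sup_le (sup_le_sup_left hui _) le_sup_right

section Rank

open Submodule

theorem rank_quotient_comap_subtype_le {R M : Type*} [Ring R] [AddCommGroup M] [Module R M]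
    {A B V : Submodule R M} (h : A ≤ V ⊔ B) :
    Module.rank R (A ⧸ B.comap A.subtype) ≤ Module.rank R V := by
  let f := B.mkQ ∘ₗ A.subtype
  have hker : LinearMap.ker f = B.comap A.subtype := by
    rw [LinearMap.ker_comp, ker_mkQ]
  have hrange : LinearMap.range f ≤ V.map B.mkQ := by
    rw [LinearMap.range_comp, range_subtype]
    calc A.map B.mkQ ≤ (V ⊔ B).map B.mkQ := map_mono h
      _ = V.map B.mkQ := by rw [Submodule.map_sup, mkQ_map_self, sup_bot_eq]
  calc Module.rank R (A ⧸ B.comap A.subtype)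
      = Module.rank R (LinearMap.range f) :=
        ((quotEquivOfEq _ _ hker.symm).trans f.quotKerEquivRange).rank_eq
    _ ≤ Module.rank R (V.map B.mkQ) := rank_mono hrange
    _ ≤ Module.rank R V := rank_map_le _ _

end Rank

open Pointwise

section Ball

variable {G : Type*} [Monoid G]

def semigroupBall (S : Set G) (n : ℕ) : Set G :=
  {g | ∃ l : List G, l.length ≤ n ∧ (∀ x ∈ l, x ∈ S) ∧ l.prod = g}

theorem one_mem_semigroupBall (S : Set G) (n : ℕ) : (1 : G) ∈ semigroupBall S n :=
  ⟨[], by simp⟩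

theorem subset_semigroupBall_one (S : Set G) : S ⊆ semigroupBall S 1 :=
  fun s hs => ⟨[s], by simp, by simpa, by simp⟩

theorem semigroupBall_mul_subset (S : Set G) (m k : ℕ) :
    semigroupBall S m * semigroupBall S k ⊆ semigroupBall S (m + k) := by
  rintro _ ⟨_, ⟨l, hl, hlS, rfl⟩, _, ⟨l', hl', hl'S, rfl⟩, rfl⟩
  refine ⟨l ++ l', by simp; omega, ?_, List.prod_append⟩
  simpa only [List.mem_append, or_imp, forall_and] using ⟨hlS, hl'S⟩

theorem semigroupBall_finite {S : Set G} (hS : S.Finite) (n : ℕ) :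
    (semigroupBall S n).Finite := by
  have := hS.to_subtype
  refine ((List.finite_length_le S n).image fun l => (l.map (↑)).prod).subset ?_
  rintro _ ⟨l, hl, hlS, rfl⟩
  lift l to List S using hlS
  exact ⟨l, by simpa using hl, rfl⟩

end Ball

theorem semigroupGrowth_eq_card_semigroupBall {G : Type*} [Group G] (S : Set G) (n : ℕ) :
    semigroupGrowth S n = Nat.card (semigroupBall S n) :=
  rfl

universe u v

section SpanBall

open Submodule

variable (k : Type u) [CommSemiring k] {G : Type v} [Monoid G]

noncomputable def spanBall (S : Set G) (n : ℕ) : Submodule k (MonoidAlgebra k G) :=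
  span k (MonoidAlgebra.of k G '' semigroupBall S n)

theorem one_mem_spanBall (S : Set G) (n : ℕ) : (1 : MonoidAlgebra k G) ∈ spanBall k S n := by
  rw [← map_one (MonoidAlgebra.of k G)]
  exact subset_span ⟨1, one_mem_semigroupBall S n, rfl⟩

theorem spanBall_mul_le (S : Set G) (m n : ℕ) :
    spanBall k S m * spanBall k S n ≤ spanBall k S (m + n) := by
  rw [spanBall, spanBall, span_mul_span, ← Set.image_mul]
  exact span_mono (Set.image_mono (semigroupBall_mul_subset S m n))

theorem pow_spanBall_one_le (S : Set G) : ∀ n : ℕ, spanBall k S 1 ^ n ≤ spanBall k S n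
  | 0 => by
    rw [pow_zero, one_eq_span, span_le, Set.singleton_subset_iff]
    exact one_mem_spanBall k S 0
  | n + 1 => (mul_le_mul_left (pow_spanBall_one_le S n) _).trans (spanBall_mul_le k S n 1)

theorem rank_spanBall_le [StrongRankCondition k] (S : Set G) (n : ℕ) :
    Module.rank k (spanBall k S n) ≤ Cardinal.lift.{u} (Cardinal.mk (semigroupBall S n)) := by
  have := Cardinal.mk_image_le_lift (f := MonoidAlgebra.of k G) (s := semigroupBall S n)
  rw [Cardinal.lift_id'.{v, u}, Cardinal.lift_umax.{v, u}] at this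
  exact (rank_span_le _).trans this

end SpanBall

section Augmentation

open Submodule

variable (F : Type u) [Field F] {G : Type v} [Group G]

theorem mem_augmentationIdeal {x : MonoidAlgebra F G} :
    x ∈ augmentationIdeal F G ↔ MonoidAlgebra.lift F F G 1 x = 0 :=
  RingHom.mem_ker

theorem sub_augmentation_smul_one_mem_augmentationIdeal (x : MonoidAlgebra F G) :
    x - MonoidAlgebra.lift F F G 1 x • 1 ∈ augmentationIdeal F G := by
  simp [mem_augmentationIdeal]

theorem of_sub_one_mem_augmentationIdeal (g : G) :
    MonoidAlgebra.of F G g - 1 ∈ augmentationIdeal F G := by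
  simpa using sub_augmentation_smul_one_mem_augmentationIdeal F (MonoidAlgebra.of F G g)

noncomputable def spanSubOne (S : Set G) : Submodule F (MonoidAlgebra F G) :=
  span F ((fun g => MonoidAlgebra.of F G g - 1) '' S)

theorem spanSubOne_le_augmentationIdeal (S : Set G) :
    spanSubOne F S ≤ (augmentationIdeal F G).restrictScalars F :=
  span_le.2 <| Set.image_subset_iff.2 fun g _ => of_sub_one_mem_augmentationIdeal F g

theorem spanSubOne_le_spanBall_one (S : Set G) : spanSubOne F S ≤ spanBall F S 1 := by
  refine span_le.2 ?_
  rintro _ ⟨s, hs, rfl⟩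
  exact sub_mem (subset_span ⟨s, subset_semigroupBall_one S hs, rfl⟩) (one_mem_spanBall F S 1)

theorem augmentationIdeal_le_spanSubOne_univ :
    (augmentationIdeal F G).restrictScalars F ≤ spanSubOne F Set.univ := by
  intro x hx
  suffices x - MonoidAlgebra.lift F F G 1 x • 1 ∈ spanSubOne F Set.univ by
    rwa [(mem_augmentationIdeal F).1 hx, zero_smul, sub_zero] at this
  clear hx
  induction x using MonoidAlgebra.induction_on with
  | of g =>
    rw [MonoidAlgebra.lift_of, MonoidHom.one_apply, one_smul]
    exact subset_span ⟨g, Set.mem_univ g, rfl⟩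
  | add x y hx hy =>
    rw [map_add, add_smul, add_sub_add_comm]
    exact add_mem hx hy
  | smul r x hx =>
    rw [map_smul, smul_eq_mul, mul_smul, ← smul_sub]
    exact smul_mem _ r hx

theorem augmentationIdeal_le_spanSubOne_sup_sq {S : Set G} (hS : Submonoid.closure S = ⊤) :
    (augmentationIdeal F G).restrictScalars F ≤
      spanSubOne F S ⊔ (augmentationIdeal F G).restrictScalars F ^ 2 := by
  refine (augmentationIdeal_le_spanSubOne_univ F).trans <| span_le.2 ?_
  rintro _ ⟨g, -, rfl⟩
  show MonoidAlgebra.of F G g - 1 ∈ spanSubOne F S ⊔ _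
  have hg : g ∈ Submonoid.closure S := hS ▸ Submonoid.mem_top g
  induction hg using Submonoid.closure_induction with
  | mem s hs => exact mem_sup_left (subset_span ⟨s, hs, rfl⟩)
  | one => rw [map_one, sub_self]; exact zero_mem _
  | mul a b _ _ ha hb =>
    have hab : MonoidAlgebra.of F G (a * b) - 1 =
        (MonoidAlgebra.of F G a - 1) * (MonoidAlgebra.of F G b - 1) +
          (MonoidAlgebra.of F G a - 1) + (MonoidAlgebra.of F G b - 1) := by
      rw [map_mul]; noncomm_ring
    rw [hab]
    refine add_mem (add_mem (mem_sup_right ?_) ha) hb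
    rw [pow_two]
    exact mul_mem_mul (of_sub_one_mem_augmentationIdeal F a)
      (of_sub_one_mem_augmentationIdeal F b)

theorem augmentationIdeal_pow_le_spanBall_sup {S : Set G} (hS : Submonoid.closure S = ⊤) :
    ∀ n : ℕ, (augmentationIdeal F G ^ n).restrictScalars F ≤
      spanBall F S n ⊔ (augmentationIdeal F G ^ (n + 1)).restrictScalars F
  | 0 => by
    intro x _
    rw [← add_sub_cancel (MonoidAlgebra.lift F F G 1 x • 1) x]
    refine add_mem (mem_sup_left (smul_mem _ _ (one_mem_spanBall F S 0))) (mem_sup_right ?_)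
    rw [zero_add, Submodule.pow_one]
    exact sub_augmentation_smul_one_mem_augmentationIdeal F x
  | n + 1 => by
    rw [restrictScalars_pow n.succ_ne_zero, restrictScalars_pow (n + 1).succ_ne_zero]
    refine (pow_le_pow_sup_pow_succ (spanSubOne_le_augmentationIdeal F S)
      (augmentationIdeal_le_spanSubOne_sup_sq F hS) (n + 1)).trans (sup_le_sup_right ?_ _)
    exact (pow_le_pow_left' (spanSubOne_le_spanBall_one F S) _).trans
      (pow_spanBall_one_le F S _)

end Augmentation

/-- **Lower bound on growth via the augmentation ideal.** If `S` is a finite set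
generating `G` as a semigroup, `Δ ⊆ F[G]` the augmentation ideal and
`a_n = dim_F(Δⁿ/Δⁿ⁺¹)`, then `γ_G^S(n) ≥ a_n` for every `n`. -/
theorem growth_ge_augmentation_ideal_rank
    {G : Type*} [Group G] (S : Finset G)
    (hgen : ∀ g : G, ∃ l : List G, (∀ x ∈ l, x ∈ (S : Set G)) ∧ l.prod = g)
    (F : Type*) [Field F] (n : ℕ) :
    Module.rank F
      (↥(Submodule.restrictScalars F (augmentationIdeal F G ^ n)) ⧸
        Submodule.comap
          (Submodule.restrictScalars F (augmentationIdeal F G ^ n)).subtype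
          (Submodule.restrictScalars F (augmentationIdeal F G ^ (n + 1))))
      ≤ (semigroupGrowth (S : Set G) n : Cardinal) := by
  have hS : Submonoid.closure (S : Set G) = ⊤ := eq_top_iff.2 fun g _ => by
    obtain ⟨l, hl, rfl⟩ := hgen g
    exact Submonoid.list_prod_mem _ fun x hx => Submonoid.subset_closure (hl x hx)
  have := (semigroupBall_finite S.finite_toSet n).to_subtype
  calc _ ≤ Module.rank F (spanBall F (S : Set G) n) :=
        rank_quotient_comap_subtype_le (augmentationIdeal_pow_le_spanBall_sup F hS n)
    _ ≤ Cardinal.lift (Cardinal.mk (semigroupBall (S : Set G) n)) := rank_spanBall_le F _ n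
    _ = semigroupGrowth (S : Set G) n := by
      rw [semigroupGrowth_eq_card_semigroupBall, ← Nat.cast_card, Cardinal.lift_natCast]
end
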